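/- Let G be a countable discrete group, X a locally compact Hausdorff space with a proper, cocompact G-action, c a cut-off function on X (compactly supported, continuous, nonnegative, with ∑_{h∈G} c(h⁻¹·x)² = 1 for every x), π : C₀(X) → B(H) a nondegenerate covariant representation on the G-Hilbert space H, and V : H → ℓ²(G, H) the isometry (Vv)_h = π(c) u_h v. Then VV* is the bounded operator P on ℓ²(G, H) given by (Pξ)_k = ∑_{h∈G} π(c · ((kh⁻¹)·c)) u_{kh⁻¹} ξ_h (for each ξ and k the sum has only finitely many nonzero terms, by properness); in particular P is an orthogonal projection. -/

import Mathlib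

/-!
Pairing with a test vector computes `V*` weakly:
`⟪(VV*ξ)_k, v⟫ = ⟪ξ, V u_{k⁻¹} π(c) v⟫ = ∑_h ⟪π(c) u_{kh⁻¹} π(c) ξ_h, v⟫`,
and covariance rewrites `π(c) u_g π(c)` as `π(c · g·c) u_g`. Properness makes `c · g·c` vanish
for all but finitely many `g`, so the series is a finite sum. Finally `VV*` is an orthogonal
projection because `V*V = 1`.
-/

open scoped ZeroAtInfty
open Filter MeasureTheory Topology

noncomputable section

variable {G : Type*} [Group G] [Countable G] [TopologicalSpace G] [DiscreteTopology G]
variable {X : Type*} [TopologicalSpace X] [LocallyCompactSpace X] [T2Space X]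
variable [MulAction G X] [ContinuousConstSMul G X]
variable {H : Type*} [NormedAddCommGroup H] [InnerProductSpace ℂ H] [CompleteSpace H]
  [SecondCountableTopology H]

/-- The translation action of `G` on `C₀(X, ℂ)`: `(g • φ)(x) = φ(g⁻¹ • x)`. -/
def C0smul (g : G) (φ : C₀(X, ℂ)) : C₀(X, ℂ) where
  toFun := fun x => φ (g⁻¹ • x)
  continuous_toFun := φ.continuous.comp (continuous_const_smul g⁻¹)
  zero_at_infty' := φ.zero_at_infty'.comp
    ((Homeomorph.smul (g⁻¹ : G)).toCocompactMap.cocompact_tendsto')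

/-- Conjugation `g(T) = u_g T u_g⁻¹` by the unitary representation `u`. -/
def conjU (u : G →* unitary (H →L[ℂ] H)) (g : G) (T : H →L[ℂ] H) : H →L[ℂ] H :=
  (u g : H →L[ℂ] H) * T * ((u g⁻¹ : unitary (H →L[ℂ] H)) : H →L[ℂ] H)

/-- The Hilbert space `ℓ²(G, H)`. -/
abbrev l2GH (G H : Type*) [NormedAddCommGroup H] [InnerProductSpace ℂ H] : Type _ :=
  lp (fun _ : G => H) 2

theorem ContinuousLinearMap.isStarProjection_comp_adjoint_of_norm_map {𝕜 E F : Type*} [RCLike 𝕜]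
    [NormedAddCommGroup E] [InnerProductSpace 𝕜 E] [CompleteSpace E]
    [NormedAddCommGroup F] [InnerProductSpace 𝕜 F] [CompleteSpace F]
    (V : E →L[𝕜] F) (hV : ∀ x, ‖V x‖ = ‖x‖) :
    IsStarProjection (V ∘L ContinuousLinearMap.adjoint V) where
  isSelfAdjoint := by
    rw [IsSelfAdjoint, ContinuousLinearMap.star_eq_adjoint, ContinuousLinearMap.adjoint_comp,
      ContinuousLinearMap.adjoint_adjoint]
  isIdempotentElem := by
    have hVV := (ContinuousLinearMap.norm_map_iff_adjoint_comp_self V).mp hV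
    change V ∘L (ContinuousLinearMap.adjoint V ∘L V) ∘L ContinuousLinearMap.adjoint V = _
    rw [hVV, ContinuousLinearMap.one_def, ContinuousLinearMap.id_comp]

theorem eq_finsum_of_inner_eq_tsum {𝕜 ι E : Type*} [RCLike 𝕜] [NormedAddCommGroup E]
    [InnerProductSpace 𝕜 E] {f : ι → E} (hf : {i | f i ≠ 0}.Finite) {x : E}
    (h : ∀ v, inner 𝕜 x v = ∑' i, inner 𝕜 (f i) v) : x = ∑ᶠ i, f i := by
  refine ext_inner_right 𝕜 fun v => ?_
  rw [h v, finsum_eq_sum_of_support_subset f (s := hf.toFinset) (by simp), sum_inner]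
  exact tsum_eq_sum fun i hi => by simp_all

theorem ZeroAtInftyContinuousMap.star_eq_self_of_im_eq_zero {X : Type*} [TopologicalSpace X]
    (c : C₀(X, ℂ)) (hc : ∀ x, (c x).im = 0) : star c = c := by
  ext x
  exact Complex.conj_eq_iff_im.mpr (hc x)

theorem finite_setOf_mul_C0smul_ne_zero {G X : Type*} [Group G] [TopologicalSpace G]
    [DiscreteTopology G] [TopologicalSpace X] [MulAction G X] [ContinuousConstSMul G X]
    (hproper : IsProperMap fun p : G × X => (p.1 • p.2, p.2))
    {φ ψ : C₀(X, ℂ)} (hφ : HasCompactSupport φ) (hψ : HasCompactSupport ψ) :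
    {g : G | φ * C0smul g ψ ≠ 0}.Finite := by
  have hcompact := (hproper.isCompact_preimage (hφ.prod hψ)).image continuous_fst
  refine (hcompact.finite (isDiscrete_iff_discreteTopology.mpr inferInstance)).subset ?_
  intro g hg
  obtain ⟨x, hx⟩ : ∃ x, φ x * ψ (g⁻¹ • x) ≠ 0 := by
    by_contra! h
    exact hg (ZeroAtInftyContinuousMap.ext h)
  refine ⟨(g, g⁻¹ • x), ⟨?_, subset_tsupport _ (right_ne_zero_of_mul hx)⟩, rfl⟩
  simpa using subset_tsupport _ (left_ne_zero_of_mul hx)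

section UnitaryRepresentation

variable {G H : Type*} [Group G] [NormedAddCommGroup H] [InnerProductSpace ℂ H] [CompleteSpace H]
  (u : G →* unitary (H →L[ℂ] H))

theorem rep_mul_apply (g g' : G) (w : H) :
    (u g : H →L[ℂ] H) ((u g' : H →L[ℂ] H) w) = (u (g * g') : H →L[ℂ] H) w := by
  rw [map_mul, Submonoid.coe_mul, mul_apply_eq_comp]

theorem adjoint_rep (g : G) :
    ContinuousLinearMap.adjoint (u g : H →L[ℂ] H) = (u g⁻¹ : H →L[ℂ] H) := by
  rw [← ContinuousLinearMap.star_eq_adjoint, ← Unitary.coe_star, Unitary.star_eq_inv, map_inv]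

theorem map_mul_C0smul_apply_rep {X : Type*} [TopologicalSpace X] [MulAction G X]
    [ContinuousConstSMul G X] {π : C₀(X, ℂ) →⋆ₙₐ[ℂ] (H →L[ℂ] H)}
    (hcov : ∀ (g : G) (φ : C₀(X, ℂ)),
      (u g : H →L[ℂ] H) * π φ * ((u g⁻¹ : unitary (H →L[ℂ] H)) : H →L[ℂ] H) = π (C0smul g φ))
    (φ ψ : C₀(X, ℂ)) (g : G) (w : H) :
    π (φ * C0smul g ψ) ((u g : H →L[ℂ] H) w) = π φ ((u g : H →L[ℂ] H) (π ψ w)) := by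
  rw [map_mul, ← hcov, mul_apply_eq_comp, mul_apply_eq_comp, mul_apply_eq_comp, rep_mul_apply,
    inv_mul_cancel, map_one, OneMemClass.coe_one, one_apply_eq_self]

theorem inner_comp_adjoint_apply {A : H →L[ℂ] H} (hA : IsSelfAdjoint A) {V : H →L[ℂ] l2GH G H}
    (hV : ∀ (v : H) (h : G), (V v) h = A ((u h : H →L[ℂ] H) v)) (ξ : l2GH G H) (k : G) (v : H) :
    inner ℂ ((V ∘L ContinuousLinearMap.adjoint V) ξ k) v =
      ∑' h, inner ℂ (A ((u (k * h⁻¹) : H →L[ℂ] H) (A (ξ h)))) v := by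
  have hA' : ∀ w w' : H, inner ℂ (A w) w' = inner ℂ w (A w') := hA.isSymmetric
  have hu : ∀ (g : G) (w w' : H),
      inner ℂ ((u g : H →L[ℂ] H) w) w' = inner ℂ w ((u g⁻¹ : H →L[ℂ] H) w') := fun g w w' => by
    rw [← adjoint_rep, ContinuousLinearMap.adjoint_inner_right]
  calc inner ℂ ((V ∘L ContinuousLinearMap.adjoint V) ξ k) v
      = inner ℂ ξ (V ((u k⁻¹ : H →L[ℂ] H) (A v))) := by
        rw [ContinuousLinearMap.comp_apply, hV, hA', hu,
          ContinuousLinearMap.adjoint_inner_left]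
    _ = ∑' h, inner ℂ (ξ h) (A ((u (h * k⁻¹) : H →L[ℂ] H) (A v))) := by
        simp only [lp.inner_eq_tsum, hV, rep_mul_apply]
    _ = ∑' h, inner ℂ (A ((u (k * h⁻¹) : H →L[ℂ] H) (A (ξ h)))) v := by
        simp only [hA', hu, mul_inv_rev, inv_inv]

end UnitaryRepresentation

theorem statement_13_general
    (u : G →* unitary (H →L[ℂ] H))
    (π : C₀(X, ℂ) →⋆ₙₐ[ℂ] (H →L[ℂ] H))
    (hcov : ∀ (g : G) (φ : C₀(X, ℂ)),
      (u g : H →L[ℂ] H) * π φ * ((u g⁻¹ : unitary (H →L[ℂ] H)) : H →L[ℂ] H) = π (C0smul g φ))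
    (hproper : IsProperMap fun p : G × X => (p.1 • p.2, p.2))
    (c : C₀(X, ℂ)) (hcs : HasCompactSupport (⇑c))
    (hc_real : ∀ x : X, (c x).im = 0)
    (V : H →L[ℂ] l2GH G H)
    (hViso : ∀ v : H, ‖V v‖ = ‖v‖)
    (hV : ∀ (v : H) (h : G), (V v) h = π c ((u h : H →L[ℂ] H) v)) :
    (∀ (ξ : l2GH G H) (k : G),
      Set.Finite
        {h : G | π (c * C0smul (k * h⁻¹) c) ((u (k * h⁻¹) : H →L[ℂ] H) (ξ h)) ≠ 0} ∧
      ((V.comp (ContinuousLinearMap.adjoint V)) ξ) k =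
        ∑ᶠ h : G, π (c * C0smul (k * h⁻¹) c) ((u (k * h⁻¹) : H →L[ℂ] H) (ξ h))) ∧
    IsSelfAdjoint (V.comp (ContinuousLinearMap.adjoint V)) ∧
    IsIdempotentElem (V.comp (ContinuousLinearMap.adjoint V)) := by
  have hprojection := V.isStarProjection_comp_adjoint_of_norm_map hViso
  refine ⟨fun ξ k => ?_, hprojection.isSelfAdjoint, hprojection.isIdempotentElem⟩
  have hfin :
      {h : G | π (c * C0smul (k * h⁻¹) c) ((u (k * h⁻¹) : H →L[ℂ] H) (ξ h)) ≠ 0}.Finite :=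
    ((finite_setOf_mul_C0smul_ne_zero hproper hcs hcs).image fun g => g⁻¹ * k).subset
      fun h hh => ⟨k * h⁻¹, fun hzero => hh (by simp [hzero]), by group⟩
  refine ⟨hfin, eq_finsum_of_inner_eq_tsum (𝕜 := ℂ) hfin fun v => ?_⟩
  have hπc : IsSelfAdjoint (π c) := by
    rw [IsSelfAdjoint, ← map_star, c.star_eq_self_of_im_eq_zero hc_real]
  simp only [map_mul_C0smul_apply_rep u hcov]
  exact inner_comp_adjoint_apply u hπc hV ξ k v

theorem statement_13
    (u : G →* unitary (H →L[ℂ] H))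
    (π : C₀(X, ℂ) →⋆ₙₐ[ℂ] (H →L[ℂ] H))
    (hπnd : Dense (Submodule.span ℂ (Set.range fun p : C₀(X, ℂ) × H => π p.1 p.2) : Set H))
    (hcov : ∀ (g : G) (φ : C₀(X, ℂ)),
      (u g : H →L[ℂ] H) * π φ * ((u g⁻¹ : unitary (H →L[ℂ] H)) : H →L[ℂ] H) = π (C0smul g φ))
    (hproper : IsProperMap fun p : G × X => (p.1 • p.2, p.2))
    (hcocompact : CompactSpace (Quotient (MulAction.orbitRel G X)))
    (c : C₀(X, ℂ)) (hcs : HasCompactSupport (⇑c))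
    (hc_real : ∀ x : X, (c x).im = 0) (hc_nonneg : ∀ x : X, 0 ≤ (c x).re)
    (hc_sum : ∀ x : X, HasSum (fun h : G => c (h⁻¹ • x) ^ 2) 1)
    (V : H →L[ℂ] l2GH G H)
    (hViso : ∀ v : H, ‖V v‖ = ‖v‖)
    (hV : ∀ (v : H) (h : G), (V v) h = π c ((u h : H →L[ℂ] H) v)) :
    (∀ (ξ : l2GH G H) (k : G),
      Set.Finite
        {h : G | π (c * C0smul (k * h⁻¹) c) ((u (k * h⁻¹) : H →L[ℂ] H) (ξ h)) ≠ 0} ∧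
      ((V.comp (ContinuousLinearMap.adjoint V)) ξ) k =
        ∑ᶠ h : G, π (c * C0smul (k * h⁻¹) c) ((u (k * h⁻¹) : H →L[ℂ] H) (ξ h))) ∧
    IsSelfAdjoint (V.comp (ContinuousLinearMap.adjoint V)) ∧
    IsIdempotentElem (V.comp (ContinuousLinearMap.adjoint V)) :=
  statement_13_general u π hcov hproper c hcs hc_real V hViso hV

end
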